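/- For two synchronized robots on an 8-node ring placed symmetrically (at antipodal-symmetric positions) with opposite chirality and identical initial states, running any deterministic anonymous algorithm whose decisions depend only on the robot's state and its local environment (presence of left/right edges, presence of another robot on its node), under an evolving graph whose edge-presence pattern is symmetric under the orientation-reversing symmetry exchanging the two robots' positions: at every time the two robots have identical states and occupy symmetric positions, hence perform symmetric moves. -/
import Mathlib


/-- Joint synchronous execution of a deterministic anonymous algorithm
`A : state → existsEdge(dir) → existsEdge(opposite dir) → existsOtherRobot → state × dir`
by two robots of opposite chirality on an evolving 8-node ring. Robot 1's local `right`
is global clockwise `+1`; robot 2's local `right` is global counter-clockwise `-1`.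
The output direction `true` means "move towards local right"; a robot moves in its
chosen direction iff the corresponding edge is present. -/
def run2 {State : Type} (A : State → Bool → Bool → Bool → State × Bool)
    (E : ℕ → ZMod 8 → Bool) (s0 : State) (p1 p2 : ZMod 8) :
    ℕ → (State × ZMod 8) × (State × ZMod 8)
  | 0 => ((s0, p1), (s0, p2))
  | t + 1 =>
    let x := run2 A E s0 p1 p2 t
    let q1 := x.1.2
    let q2 := x.2.2
    let co : Bool := decide (q1 = q2)
    let o1 := A x.1.1 (E t q1) (E t (q1 - 1)) co
    let o2 := A x.2.1 (E t (q2 - 1)) (E t q2) co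
    ((o1.1, if o1.2 then (if E t q1 then q1 + 1 else q1)
            else (if E t (q1 - 1) then q1 - 1 else q1)),
     (o2.1, if o2.2 then (if E t (q2 - 1) then q2 - 1 else q2)
            else (if E t q2 then q2 + 1 else q2)))

/-- Two robots on an 8-node ring placed at symmetric positions (under the
orientation-reversing automorphism `σ : x ↦ c - x`), with opposite chirality, identical
initial states, at odd cycle distance, running the same deterministic anonymous
algorithm on a `σ`-symmetric evolving graph, have identical states and occupy symmetric
positions at every time (hence perform symmetric moves). -/
theorem stmt15 {State : Type} (A : State → Bool → Bool → Bool → State × Bool)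
    (E : ℕ → ZMod 8 → Bool) (c : ZMod 8)
    (hsym : ∀ (t : ℕ) (x : ZMod 8), E t x = E t (c - x - 1))
    (s0 : State) (p1 p2 : ZMod 8) (hp : p2 = c - p1)
    (hodd : Odd (min ((p1 - p2).val) ((p2 - p1).val))) :
    ∀ t : ℕ,
      (run2 A E s0 p1 p2 t).1.1 = (run2 A E s0 p1 p2 t).2.1 ∧
      (run2 A E s0 p1 p2 t).2.2 = c - (run2 A E s0 p1 p2 t).1.2 := by
  intro t
  induction t with
  | zero => exact ⟨rfl, hp⟩
  | succ t ih =>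
    obtain ⟨hs, hq⟩ := ih
    set x := run2 A E s0 p1 p2 t with hx
    have e1 : E t (x.2.2 - 1) = E t x.1.2 := by
      rw [hq, hsym t x.1.2]
    have e2 : E t x.2.2 = E t (x.1.2 - 1) := by
      rw [hq, hsym t (x.1.2 - 1)]; ring_nf
    have hco : (decide (x.1.2 = x.2.2)) = decide (x.2.2 = x.1.2) := by
      simp [eq_comm]
    have hA : A x.1.1 (E t x.1.2) (E t (x.1.2 - 1)) (decide (x.1.2 = x.2.2))
        = A x.2.1 (E t (x.2.2 - 1)) (E t x.2.2) (decide (x.1.2 = x.2.2)) := by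
      rw [hs, e1, e2]
    show ((A x.1.1 (E t x.1.2) (E t (x.1.2 - 1)) (decide (x.1.2 = x.2.2))).1 = _) ∧ _
    constructor
    · exact congrArg Prod.fst hA
    · show (if (A x.2.1 (E t (x.2.2 - 1)) (E t x.2.2) (decide (x.1.2 = x.2.2))).2
          then (if E t (x.2.2 - 1) then x.2.2 - 1 else x.2.2)
          else (if E t x.2.2 then x.2.2 + 1 else x.2.2))
        = c - (if (A x.1.1 (E t x.1.2) (E t (x.1.2 - 1)) (decide (x.1.2 = x.2.2))).2
          then (if E t x.1.2 then x.1.2 + 1 else x.1.2)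
          else (if E t (x.1.2 - 1) then x.1.2 - 1 else x.1.2))
      rw [hA, e1, e2]
      cases hb : (A x.2.1 (E t x.1.2) (E t (x.1.2 - 1)) (decide (x.1.2 = x.2.2))).2 <;>
        rcases h1 : E t x.1.2 with _ | _ <;>
        rcases h2 : E t (x.1.2 - 1) with _ | _ <;>
        simp only [hb, h1, h2, Bool.false_eq_true, if_false, if_true, hq] <;> ring
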